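/- arXiv:2111.03360 — 3 statements merged into one kernel-verified Lean document; each statement's English description precedes it below -/
import Mathlib

section
/- Let D be a set of edge failures, let u, v be connected in G−D, and let r = rank_{G−D}(u,v). If w is a vertex on π_{G−D}(u,v) such that both π(u,w) and π(w,v) contain an edge of D, then rank_{G−D}(u,w) ≤ r−1 and rank_{G−D}(w,v) ≤ r−1. -/
open SimpleGraph

variable {V : Type*}

/-- Total weight of a walk with respect to edge weights `w`. -/
def walkWeight (w : Sym2 V → ℝ) {G : SimpleGraph V} {a b : V} (p : G.Walk a b) : ℝ :=
  (p.edges.map w).sum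

/-- `p` is the/a minimum-weight path from `a` to `b` in `G`. -/
def IsShortestPath (w : Sym2 V → ℝ) (G : SimpleGraph V) {a b : V} (p : G.Walk a b) : Prop :=
  p.IsPath ∧ ∀ q : G.Walk a b, q.IsPath → walkWeight w p ≤ walkWeight w q

/-- `Decomposable w G k p` : `p` is the concatenation of at most `k+1` shortest paths
of `G` interleaved with at most `k` single edges. -/
inductive Decomposable (w : Sym2 V → ℝ) (G : SimpleGraph V) :
    ℕ → ∀ {a b : V}, G.Walk a b → Prop
  | single {a b : V} (k : ℕ) (p : G.Walk a b) (hp : IsShortestPath w G p) :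
      Decomposable w G k p
  | cons {a b c d : V} (k : ℕ) (p : G.Walk a b) (h : G.Adj b c) (q : G.Walk c d)
      (hp : IsShortestPath w G p) (hq : Decomposable w G k q) :
      Decomposable w G (k + 1) (p.append (Walk.cons h q))

/-- The rank of a walk `p` in `G`: the least `k` such that `p` is `k`-decomposable. -/
noncomputable def pathRank (w : Sym2 V → ℝ) (G : SimpleGraph V) {a b : V} (p : G.Walk a b) : ℕ :=
  sInf {k | Decomposable w G k p}

/-!
Split a rank-`r` decomposition of `π_{G−D}(u,v)` at `x`: the two halves inherit decompositions
whose ranks add up to at most `r`. Neither half is a shortest path of `G`, since the unique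
shortest paths `π(u,x)` and `π(x,v)` use an edge of `D` while the halves avoid `D`; so each half
has rank at least `1`, which bounds the rank of the other half by `r - 1`.
-/

namespace SimpleGraph.Walk

variable {G : SimpleGraph V} [DecidableEq V]

lemma dropUntil_append_of_mem_left {a b c x : V} (p : G.Walk a b) (q : G.Walk b c)
    (hx : x ∈ p.support) :
    (p.append q).dropUntil x (support_subset_support_append_left _ _ hx) =
      (p.dropUntil x hx).append q := by
  induction p with
  | nil => rw [mem_support_nil_iff] at hx; subst_vars; simp
  | @cons a _ _ _ _ ih =>
    by_cases hax : a = x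
    · subst hax; simp
    · grind [cons_append, dropUntil]

lemma takeUntil_append_of_notMem_left {a b c x : V} (p : G.Walk a b) (q : G.Walk b c)
    (hxp : x ∉ p.support) (hx : x ∈ q.support) :
    (p.append q).takeUntil x (support_subset_support_append_right _ _ hx) =
      p.append (q.takeUntil x hx) := by
  induction p with
  | nil => simp
  | cons => grind [cons_append, takeUntil, support_cons]

lemma dropUntil_append_of_notMem_left {a b c x : V} (p : G.Walk a b) (q : G.Walk b c)
    (hxp : x ∉ p.support) (hx : x ∈ q.support) :
    (p.append q).dropUntil x (support_subset_support_append_right _ _ hx) =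
      q.dropUntil x hx := by
  induction p with
  | nil => simp
  | cons => grind [cons_append, dropUntil, support_cons]

lemma takeUntil_mapLe {G' : SimpleGraph V} (hle : G ≤ G') {a b x : V} (p : G.Walk a b)
    (hx : x ∈ p.support) (hx' : x ∈ (p.mapLe hle).support) :
    (p.mapLe hle).takeUntil x hx' = (p.takeUntil x hx).mapLe hle := by
  apply ext_support
  simp [takeUntil_eq_take, support_take]

lemma dropUntil_mapLe {G' : SimpleGraph V} (hle : G ≤ G') {a b x : V} (p : G.Walk a b)
    (hx : x ∈ p.support) (hx' : x ∈ (p.mapLe hle).support) :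
    (p.mapLe hle).dropUntil x hx' = (p.dropUntil x hx).mapLe hle := by
  apply ext_support
  simp [dropUntil_eq_drop, drop_support_eq_support_drop_min]

end SimpleGraph.Walk

section ShortestPath

variable {w : Sym2 V → ℝ} {G : SimpleGraph V}

lemma walkWeight_append {a b c : V} (p : G.Walk a b) (q : G.Walk b c) :
    walkWeight w (p.append q) = walkWeight w p + walkWeight w q := by
  simp [walkWeight, Walk.edges_append]

lemma walkWeight_bypass_le [DecidableEq V] (hw : ∀ e ∈ G.edgeSet, 0 ≤ w e) {a b : V}
    (p : G.Walk a b) : walkWeight w p.bypass ≤ walkWeight w p :=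
  (p.edges_bypass_sublist_edges.map w).sum_le_sum fun _ hm => by
    obtain ⟨e, he, rfl⟩ := List.mem_map.mp hm
    exact hw e (p.edges_subset_edgeSet he)

lemma isShortestPath_nil {a : V} : IsShortestPath w G (Walk.nil : G.Walk a a) :=
  ⟨Walk.IsPath.nil, fun q hq => by rw [(Walk.isPath_iff_nil.mp hq).eq_nil]⟩

variable [DecidableEq V]

lemma IsShortestPath.of_append_left (hw : ∀ e ∈ G.edgeSet, 0 ≤ w e) {a b c : V}
    {p : G.Walk a b} {q : G.Walk b c} (h : IsShortestPath w G (p.append q)) :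
    IsShortestPath w G p := by
  refine ⟨h.1.of_append_left, fun p' _ => ?_⟩
  have : walkWeight w p + walkWeight w q ≤ walkWeight w p' + walkWeight w q := calc
    _ = walkWeight w (p.append q) := (walkWeight_append p q).symm
    _ ≤ walkWeight w (p'.append q).bypass := h.2 _ (p'.append q).bypass_isPath
    _ ≤ walkWeight w (p'.append q) := walkWeight_bypass_le hw _
    _ = _ := walkWeight_append p' q
  linarith

lemma IsShortestPath.of_append_right (hw : ∀ e ∈ G.edgeSet, 0 ≤ w e) {a b c : V}
    {p : G.Walk a b} {q : G.Walk b c} (h : IsShortestPath w G (p.append q)) :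
    IsShortestPath w G q := by
  refine ⟨h.1.of_append_right, fun q' _ => ?_⟩
  have : walkWeight w p + walkWeight w q ≤ walkWeight w p + walkWeight w q' := calc
    _ = walkWeight w (p.append q) := (walkWeight_append p q).symm
    _ ≤ walkWeight w (p.append q').bypass := h.2 _ (p.append q').bypass_isPath
    _ ≤ walkWeight w (p.append q') := walkWeight_bypass_le hw _
    _ = _ := walkWeight_append p q'
  linarith

lemma IsShortestPath.takeUntil (hw : ∀ e ∈ G.edgeSet, 0 ≤ w e) {a b x : V}
    {p : G.Walk a b} (hp : IsShortestPath w G p) (hx : x ∈ p.support) :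
    IsShortestPath w G (p.takeUntil x hx) :=
  IsShortestPath.of_append_left hw (q := p.dropUntil x hx) ((p.take_spec hx).symm ▸ hp)

lemma IsShortestPath.dropUntil (hw : ∀ e ∈ G.edgeSet, 0 ≤ w e) {a b x : V}
    {p : G.Walk a b} (hp : IsShortestPath w G p) (hx : x ∈ p.support) :
    IsShortestPath w G (p.dropUntil x hx) :=
  IsShortestPath.of_append_right hw (p := p.takeUntil x hx) ((p.take_spec hx).symm ▸ hp)

end ShortestPath

section Rank

variable {w : Sym2 V → ℝ} {G : SimpleGraph V}

lemma decomposable_length {a b : V} (p : G.Walk a b) : Decomposable w G p.length p := by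
  induction p with
  | nil => exact .single _ _ isShortestPath_nil
  | cons h q ih => simpa using Decomposable.cons _ Walk.nil h q isShortestPath_nil ih

lemma Decomposable.isShortestPath_of_zero {a b : V} {p : G.Walk a b}
    (h : Decomposable w G 0 p) : IsShortestPath w G p := by
  cases h with
  | single _ _ hp => exact hp

lemma decomposable_pathRank {a b : V} (p : G.Walk a b) :
    Decomposable w G (pathRank w G p) p :=
  Nat.sInf_mem (s := {k | Decomposable w G k p}) ⟨_, decomposable_length p⟩

lemma pathRank_le {a b : V} {k : ℕ} {p : G.Walk a b} (h : Decomposable w G k p) :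
    pathRank w G p ≤ k :=
  Nat.sInf_le h

lemma pathRank_pos_of_not_isShortestPath {a b : V} {p : G.Walk a b}
    (h : ¬ IsShortestPath w G p) : 0 < pathRank w G p :=
  Nat.pos_of_ne_zero fun h0 => h (h0 ▸ decomposable_pathRank p).isShortestPath_of_zero

variable [DecidableEq V]

lemma Decomposable.split (hw : ∀ e ∈ G.edgeSet, 0 ≤ w e) {a b : V} {k : ℕ} {s : G.Walk a b}
    (hs : Decomposable w G k s) (x : V) (hx : x ∈ s.support) :
    ∃ i j, i + j ≤ k ∧ Decomposable w G i (s.takeUntil x hx) ∧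
      Decomposable w G j (s.dropUntil x hx) := by
  induction hs with
  | single k p hp =>
    exact ⟨0, 0, Nat.zero_le _, .single _ _ (hp.takeUntil hw hx),
      .single _ _ (hp.dropUntil hw hx)⟩
  | @cons _ b _ _ k p h q hp hq ih =>
    by_cases hxp : x ∈ p.support
    · refine ⟨0, k + 1, by omega, ?_, ?_⟩
      · rw [p.takeUntil_append_of_mem_left _ hxp]
        exact .single _ _ (hp.takeUntil hw hxp)
      · rw [p.dropUntil_append_of_mem_left _ hxp]
        exact .cons k _ h q (hp.dropUntil hw hxp) hq
    · have hbx : b ≠ x := fun hbx => hxp (hbx ▸ p.end_mem_support)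
      have hxq : x ∈ q.support := by
        simpa [hxp, Ne.symm hbx] using hx
      obtain ⟨i, j, hij, hi, hj⟩ := ih hxq
      refine ⟨i + 1, j, by omega, ?_, ?_⟩
      · rw [p.takeUntil_append_of_notMem_left (.cons h q) hxp (List.mem_cons_of_mem _ hxq),
          Walk.takeUntil_cons hxq hbx]
        exact .cons i p h _ hp hi
      · rw [p.dropUntil_append_of_notMem_left (.cons h q) hxp (List.mem_cons_of_mem _ hxq)]
        simpa [Walk.dropUntil, hbx] using hj

lemma pathRank_takeUntil_add_pathRank_dropUntil_le (hw : ∀ e ∈ G.edgeSet, 0 ≤ w e)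
    {a b x : V} (p : G.Walk a b) (hx : x ∈ p.support) :
    pathRank w G (p.takeUntil x hx) + pathRank w G (p.dropUntil x hx) ≤ pathRank w G p := by
  obtain ⟨i, j, hij, hi, hj⟩ := (decomposable_pathRank p).split hw x hx
  linarith [pathRank_le hi, pathRank_le hj]

end Rank

lemma not_isShortestPath_mapLe_deleteEdges {w : Sym2 V → ℝ} {G : SimpleGraph V}
    {D : Set (Sym2 V)} {a b : V}
    (huniq : ∀ p q : G.Walk a b, IsShortestPath w G p → IsShortestPath w G q → p = q)
    {π : G.Walk a b} (hπ : IsShortestPath w G π) (hD : ∃ e ∈ π.edges, e ∈ D)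
    (Q : (G.deleteEdges D).Walk a b) :
    ¬ IsShortestPath w G (Q.mapLe (deleteEdges_le D)) := by
  intro hQ
  obtain ⟨e, he, heD⟩ := hD
  rw [huniq _ _ hπ hQ, Walk.edges_mapLe_eq_edges] at he
  exact (edgeSet_deleteEdges D ▸ Q.edges_subset_edgeSet he).2 heD

theorem stmt1_general [DecidableEq V] (G : SimpleGraph V) (w : Sym2 V → ℝ)
    (hw : ∀ e ∈ G.edgeSet, 0 < w e)
    (huniqG : ∀ (a b : V) (p q : G.Walk a b),
      IsShortestPath w G p → IsShortestPath w G q → p = q)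
    (D : Set (Sym2 V))
    (huniqD : ∀ (a b : V) (p q : (G.deleteEdges D).Walk a b),
      IsShortestPath w (G.deleteEdges D) p → IsShortestPath w (G.deleteEdges D) q → p = q)
    (u v : V) (P : (G.deleteEdges D).Walk u v)
    (hP : IsShortestPath w (G.deleteEdges D) P)
    (r : ℕ) (hr : r = pathRank w G (P.mapLe (SimpleGraph.deleteEdges_le D)))
    (x : V) (hx : x ∈ P.support)
    -- both π(u,x) and π(x,v) contain an edge of D
    (Pux : G.Walk u x) (hPux : IsShortestPath w G Pux)
    (Pxv : G.Walk x v) (hPxv : IsShortestPath w G Pxv)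
    (hux : ∃ e ∈ Pux.edges, e ∈ D) (hxv : ∃ e ∈ Pxv.edges, e ∈ D)
    -- the shortest paths π_{G−D}(u,x) and π_{G−D}(x,v)
    (Qux : (G.deleteEdges D).Walk u x) (hQux : IsShortestPath w (G.deleteEdges D) Qux)
    (Qxv : (G.deleteEdges D).Walk x v) (hQxv : IsShortestPath w (G.deleteEdges D) Qxv) :
    pathRank w G (Qux.mapLe (SimpleGraph.deleteEdges_le D)) ≤ r - 1 ∧
    pathRank w G (Qxv.mapLe (SimpleGraph.deleteEdges_le D)) ≤ r - 1 := by
  have hwD : ∀ e ∈ (G.deleteEdges D).edgeSet, 0 ≤ w e :=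
    fun e he => (hw e (edgeSet_mono (deleteEdges_le D) he)).le
  obtain rfl : Qux = P.takeUntil x hx := huniqD u x _ _ hQux (hP.takeUntil hwD hx)
  obtain rfl : Qxv = P.dropUntil x hx := huniqD x v _ _ hQxv (hP.dropUntil hwD hx)
  have hx' : x ∈ (P.mapLe (deleteEdges_le D)).support := by
    rwa [Walk.support_mapLe_eq_support]
  have hsplit := pathRank_takeUntil_add_pathRank_dropUntil_le (fun e he => (hw e he).le) _ hx'
  rw [Walk.takeUntil_mapLe _ P hx hx', Walk.dropUntil_mapLe _ P hx hx', ← hr] at hsplit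
  have hux_pos := pathRank_pos_of_not_isShortestPath
    (not_isShortestPath_mapLe_deleteEdges (huniqG u x) hPux hux (P.takeUntil x hx))
  have hxv_pos := pathRank_pos_of_not_isShortestPath
    (not_isShortestPath_mapLe_deleteEdges (huniqG x v) hPxv hxv (P.dropUntil x hx))
  omega

/-- Let `D` be a set of edge failures, `u, v` connected in `G − D`, and
`r = rank_{G−D}(u,v)`.  If `x` is a vertex on `π_{G−D}(u,v)` such that both `π(u,x)` and
`π(x,v)` contain an edge of `D`, then `rank_{G−D}(u,x) ≤ r − 1` and `rank_{G−D}(x,v) ≤ r − 1`. -/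
theorem stmt1 [Fintype V] [DecidableEq V] (G : SimpleGraph V) (w : Sym2 V → ℝ)
    (hw : ∀ e ∈ G.edgeSet, 0 < w e)
    (huniqG : ∀ (a b : V) (p q : G.Walk a b),
      IsShortestPath w G p → IsShortestPath w G q → p = q)
    (D : Set (Sym2 V)) (hDsub : D ⊆ G.edgeSet)
    (huniqD : ∀ (a b : V) (p q : (G.deleteEdges D).Walk a b),
      IsShortestPath w (G.deleteEdges D) p → IsShortestPath w (G.deleteEdges D) q → p = q)
    (u v : V) (P : (G.deleteEdges D).Walk u v)
    (hP : IsShortestPath w (G.deleteEdges D) P)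
    (r : ℕ) (hr : r = pathRank w G (P.mapLe (SimpleGraph.deleteEdges_le D)))
    (x : V) (hx : x ∈ P.support)
    -- both π(u,x) and π(x,v) contain an edge of D
    (Pux : G.Walk u x) (hPux : IsShortestPath w G Pux)
    (Pxv : G.Walk x v) (hPxv : IsShortestPath w G Pxv)
    (hux : ∃ e ∈ Pux.edges, e ∈ D) (hxv : ∃ e ∈ Pxv.edges, e ∈ D)
    -- the shortest paths π_{G−D}(u,x) and π_{G−D}(x,v)
    (Qux : (G.deleteEdges D).Walk u x) (hQux : IsShortestPath w (G.deleteEdges D) Qux)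
    (Qxv : (G.deleteEdges D).Walk x v) (hQxv : IsShortestPath w (G.deleteEdges D) Qxv) :
    pathRank w G (Qux.mapLe (SimpleGraph.deleteEdges_le D)) ≤ r - 1 ∧
    pathRank w G (Qxv.mapLe (SimpleGraph.deleteEdges_le D)) ≤ r - 1 :=
  stmt1_general G w hw huniqG D huniqD u v P hP r hr x hx Pux hPux Pxv hPxv hux hxv Qux hQux Qxv
    hQxv
end

section
/- Suppose G is connected and D is a set of edge failures such that every pair of vertices remains connected in G−D. Suppose L : V×V → ℝ and H : V×V → finite subsets of V satisfy, for all vertices a,b: (i) L(a,b) ≥ |π_{G−D}(a,b)|, and (ii) either L(a,b) = |π_{G−D}(a,b)| or π_{G−D}(a,b) passes through some vertex w ∈ H(a,b) such that both π(a,w) and π(w,b) contain an edge of D. Define F : ℕ×V×V → ℝ∪{+∞} recursively by: F(r,a,b) = |π(a,b)| if π(a,b) contains no edge of D; otherwise F(0,a,b) = +∞; and otherwise F(r,a,b) = min( L(a,b), min over w ∈ H(a,b) of F(r−1,a,w) + F(r−1,w,b) ). Then for every r ≥ 0 and all vertices u,v with rank_{G−D}(u,v) ≤ r, it holds that F(r,u,v)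 = |π_{G−D}(u,v)|. -/
open SimpleGraph

variable {V : Type*}

namespace Stmt2Aux

variable {G : SimpleGraph V} {w : Sym2 V → ℝ}

lemma walkWeight_append {a b c : V} (p : G.Walk a b) (q : G.Walk b c) :
    walkWeight w (p.append q) = walkWeight w p + walkWeight w q := by
  simp [walkWeight, SimpleGraph.Walk.edges_append]

lemma walkWeight_nonneg (hw : ∀ e ∈ G.edgeSet, 0 ≤ w e) {a b : V} (p : G.Walk a b) :
    0 ≤ walkWeight w p := by
  apply List.sum_nonneg
  intro x hx
  simp only [List.mem_map] at hx
  obtain ⟨e, he, rfl⟩ := hx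
  exact hw e (SimpleGraph.Walk.edges_subset_edgeSet p he)

lemma walkWeight_dropUntil_le [DecidableEq V] (hw : ∀ e ∈ G.edgeSet, 0 ≤ w e)
    {a b x : V} (p : G.Walk a b) (hx : x ∈ p.support) :
    walkWeight w (p.dropUntil x hx) ≤ walkWeight w p := by
  conv_rhs => rw [← p.take_spec hx]
  rw [walkWeight_append]
  have := walkWeight_nonneg hw (p.takeUntil x hx)
  linarith

lemma walkWeight_bypass_le [DecidableEq V] (hw : ∀ e ∈ G.edgeSet, 0 ≤ w e)
    {a b : V} (p : G.Walk a b) :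
    walkWeight w p.bypass ≤ walkWeight w p := by
  induction p with
  | nil => simp [SimpleGraph.Walk.bypass]
  | cons ha p ih =>
    simp only [SimpleGraph.Walk.bypass]
    split_ifs with hs
    · refine (walkWeight_dropUntil_le hw _ hs).trans ?_
      refine ih.trans ?_
      simp only [walkWeight, SimpleGraph.Walk.edges_cons, List.map_cons, List.sum_cons]
      linarith [hw _ (G.mem_edgeSet.mpr ha)]
    · simp only [walkWeight, SimpleGraph.Walk.edges_cons, List.map_cons, List.sum_cons]
      have := ih
      simp only [walkWeight] at this
      linarith

lemma shortest_le_walk [DecidableEq V] (hw : ∀ e ∈ G.edgeSet, 0 ≤ w e)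
    {a b : V} {p : G.Walk a b} (hp : IsShortestPath w G p) (q : G.Walk a b) :
    walkWeight w p ≤ walkWeight w q :=
  (hp.2 q.bypass q.bypass_isPath).trans (walkWeight_bypass_le hw q)

lemma edges_mapLe {G' : SimpleGraph V} (h : G ≤ G') {a b : V} (p : G.Walk a b) :
    (p.mapLe h).edges = p.edges := by
  induction p with
  | nil => rfl
  | cons ha p ih =>
    simp only [SimpleGraph.Walk.mapLe, SimpleGraph.Walk.map_cons,
      SimpleGraph.Walk.edges_cons]
    simp only [SimpleGraph.Walk.mapLe] at ih
    rw [ih]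
    rfl

lemma support_mapLe {G' : SimpleGraph V} (h : G ≤ G') {a b : V} (p : G.Walk a b) :
    (p.mapLe h).support = p.support := by
  induction p with
  | nil => rfl
  | cons ha p ih =>
    simp only [SimpleGraph.Walk.mapLe, SimpleGraph.Walk.map_cons,
      SimpleGraph.Walk.support_cons]
    simp only [SimpleGraph.Walk.mapLe] at ih
    rw [ih]

lemma walkWeight_mapLe {G' : SimpleGraph V} (h : G ≤ G') {a b : V} (p : G.Walk a b) :
    walkWeight w (p.mapLe h) = walkWeight w p := by
  unfold walkWeight
  rw [edges_mapLe]

lemma walkWeight_transfer {G' : SimpleGraph V} {a b : V} (p : G.Walk a b)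
    (hp : ∀ e ∈ p.edges, e ∈ G'.edgeSet) :
    walkWeight w (p.transfer G' hp) = walkWeight w p := by
  simp [walkWeight, SimpleGraph.Walk.edges_transfer]

lemma isShortestPath_nil (hw : ∀ e ∈ G.edgeSet, 0 ≤ w e) {a : V} :
    IsShortestPath w G (Walk.nil : G.Walk a a) :=
  ⟨SimpleGraph.Walk.IsPath.nil, fun q _ => by
    simpa [walkWeight] using walkWeight_nonneg hw q⟩

lemma decomposable_length (hw : ∀ e ∈ G.edgeSet, 0 ≤ w e) {a b : V} (p : G.Walk a b) :
    Decomposable w G p.length p := by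
  induction p with
  | nil => exact .single 0 _ (isShortestPath_nil hw)
  | cons ha p ih =>
    exact Decomposable.cons p.length Walk.nil ha p (isShortestPath_nil hw) ih

lemma Decomposable.mono {k k' : ℕ} {a b : V} {p : G.Walk a b}
    (h : Decomposable w G k p) (hk : k ≤ k') : Decomposable w G k' p := by
  induction h generalizing k' with
  | single k p hp => exact .single _ p hp
  | cons k p ha q hp hq ih =>
    obtain ⟨k'', rfl⟩ : ∃ k'', k' = k'' + 1 := ⟨k' - 1, by omega⟩
    exact .cons k'' p ha q hp (ih (by omega))

lemma shortest_of_append_left [DecidableEq V] (hw : ∀ e ∈ G.edgeSet, 0 ≤ w e)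
    {a x b : V} {q1 : G.Walk a x} {q2 : G.Walk x b}
    (hp : IsShortestPath w G (q1.append q2)) : IsShortestPath w G q1 := by
  refine ⟨hp.1.of_append_left, fun s hs => ?_⟩
  by_contra hlt
  push_neg at hlt
  have h1 := shortest_le_walk hw hp (s.append q2)
  rw [walkWeight_append, walkWeight_append] at h1
  linarith

lemma shortest_of_append_right [DecidableEq V] (hw : ∀ e ∈ G.edgeSet, 0 ≤ w e)
    {a x b : V} {q1 : G.Walk a x} {q2 : G.Walk x b}
    (hp : IsShortestPath w G (q1.append q2)) : IsShortestPath w G q2 := by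
  refine ⟨hp.1.of_append_right, fun s hs => ?_⟩
  by_contra hlt
  push_neg at hlt
  have h1 := shortest_le_walk hw hp (q1.append s)
  rw [walkWeight_append, walkWeight_append] at h1
  linarith

lemma decomposable_split [DecidableEq V] (hw : ∀ e ∈ G.edgeSet, 0 ≤ w e)
    {k : ℕ} {a b : V} {p : G.Walk a b} (h : Decomposable w G k p) :
    ∀ x, ∀ hx : x ∈ p.support,
    ∃ (i j : ℕ) (q1 : G.Walk a x) (q2 : G.Walk x b),
      i + j ≤ k ∧ p = q1.append q2 ∧ Decomposable w G i q1 ∧ Decomposable w G j q2 := by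
  induction h with
  | single k p hp =>
    intro x hx
    refine ⟨0, 0, p.takeUntil x hx, p.dropUntil x hx, by omega, (p.take_spec hx).symm,
      .single _ _ ?_, .single _ _ ?_⟩
    · exact shortest_of_append_left hw (by rw [p.take_spec hx]; exact hp)
    · exact shortest_of_append_right hw (by rw [p.take_spec hx]; exact hp)
  | cons k p ha q hp hq ih =>
    intro x hx
    by_cases hxp : x ∈ p.support
    · refine ⟨0, k + 1, p.takeUntil x hxp, (p.dropUntil x hxp).append (Walk.cons ha q),
        by omega, ?_, .single _ _ (shortest_of_append_left hw
          (by rw [p.take_spec hxp]; exact hp)),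
        .cons k _ ha q (shortest_of_append_right hw (by rw [p.take_spec hxp]; exact hp)) hq⟩
      rw [SimpleGraph.Walk.append_assoc, p.take_spec hxp]
    · have hxq : x ∈ q.support := by
        rw [SimpleGraph.Walk.mem_support_append_iff] at hx
        rcases hx with hx | hx
        · exact absurd hx hxp
        · rw [SimpleGraph.Walk.support_cons, List.mem_cons] at hx
          rcases hx with rfl | hx
          · exact absurd p.end_mem_support hxp
          · exact hx
      obtain ⟨i, j, s1, s2, hij, hqeq, h1, h2⟩ := ih x hxq
      refine ⟨i + 1, j, p.append (Walk.cons ha s1), s2, by omega, ?_,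
        .cons i p ha s1 hp h1, h2⟩
      rw [hqeq, ← SimpleGraph.Walk.append_assoc, SimpleGraph.Walk.cons_append]

end Stmt2Aux

/-- correctness of the query algorithm.  Suppose `G` is connected and every
pair of vertices remains connected in `G − D` (witnessed by the shortest-path families `πG`
and `πD`).  Suppose `L` and `H` satisfy conditions (i) and (ii) of the `HitSet` structure,
and `F` satisfies the stated recursion.  Then for every `r` and all `u, v` with
`rank_{G−D}(u,v) ≤ r`, we have `F r u v = |π_{G−D}(u,v)|`. -/
theorem stmt2 [Fintype V] [DecidableEq V] (G : SimpleGraph V) (w : Sym2 V → ℝ)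
    (hw : ∀ e ∈ G.edgeSet, 0 < w e)
    (hGconn : G.Connected)
    (D : Set (Sym2 V)) (hDsub : D ⊆ G.edgeSet)
    -- shortest paths in G, assumed unique
    (πG : ∀ a b : V, G.Walk a b) (hπG : ∀ a b : V, IsShortestPath w G (πG a b))
    (huniqG : ∀ (a b : V) (p q : G.Walk a b),
      IsShortestPath w G p → IsShortestPath w G q → p = q)
    -- shortest paths in G − D, assumed unique (so every pair is connected in G − D)
    (πD : ∀ a b : V, (G.deleteEdges D).Walk a b)
    (hπD : ∀ a b : V, IsShortestPath w (G.deleteEdges D) (πD a b))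
    (huniqD : ∀ (a b : V) (p q : (G.deleteEdges D).Walk a b),
      IsShortestPath w (G.deleteEdges D) p → IsShortestPath w (G.deleteEdges D) q → p = q)
    (L : V → V → ℝ) (H : V → V → Finset V)
    -- (i) L(a,b) ≥ |π_{G−D}(a,b)|
    (hL : ∀ a b : V, walkWeight w (πD a b) ≤ L a b)
    -- (ii) either L(a,b) = |π_{G−D}(a,b)|, or π_{G−D}(a,b) goes through some x ∈ H(a,b)
    -- such that both π(a,x) and π(x,b) contain an edge of D
    (hH : ∀ a b : V, L a b = walkWeight w (πD a b) ∨
      ∃ x ∈ H a b, x ∈ (πD a b).support ∧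
        (∃ e ∈ (πG a x).edges, e ∈ D) ∧ (∃ e ∈ (πG x b).edges, e ∈ D))
    (F : ℕ → V → V → WithTop ℝ)
    -- F(r,a,b) = |π(a,b)| whenever π(a,b) contains no edge of D
    (hF_intact : ∀ (r : ℕ) (a b : V), (∀ e ∈ (πG a b).edges, e ∉ D) →
      F r a b = (walkWeight w (πG a b) : ℝ))
    -- otherwise F(0,a,b) = +∞
    (hF_zero : ∀ a b : V, (∃ e ∈ (πG a b).edges, e ∈ D) → F 0 a b = ⊤)
    -- otherwise F(r+1,a,b) = min(L(a,b), min_{x ∈ H(a,b)} F(r,a,x) + F(r,x,b))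
    (hF_rec : ∀ (r : ℕ) (a b : V), (∃ e ∈ (πG a b).edges, e ∈ D) →
      F (r + 1) a b =
        min ((L a b : ℝ) : WithTop ℝ) ((H a b).inf fun x => F r a x + F r x b)) :
    ∀ (r : ℕ) (u v : V),
      pathRank w G ((πD u v).mapLe (SimpleGraph.deleteEdges_le D)) ≤ r →
      F r u v = (walkWeight w (πD u v) : ℝ) := by

  classical
  have hw0 : ∀ e ∈ G.edgeSet, 0 ≤ w e := fun e he => (hw e he).le
  have hwD : ∀ e ∈ (G.deleteEdges D).edgeSet, 0 ≤ w e := fun e he =>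
    hw0 e (SimpleGraph.edgeSet_mono (G.deleteEdges_le D) he)
  have hπD_avoid : ∀ a b : V, ∀ e ∈ (πD a b).edges, e ∉ D := by
    intro a b e he
    have h1 := SimpleGraph.Walk.edges_subset_edgeSet _ he
    rw [SimpleGraph.edgeSet_deleteEdges] at h1
    exact h1.2
  have hintact : ∀ a b : V, (∀ e ∈ (πG a b).edges, e ∉ D) →
      walkWeight w (πG a b) = walkWeight w (πD a b) := by
    intro a b hA
    apply le_antisymm
    · have h1 := (hπG a b).2 ((πD a b).mapLe (G.deleteEdges_le D))
        ((hπD a b).1.mapLe _)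
      rwa [Stmt2Aux.walkWeight_mapLe] at h1
    · have hsub : ∀ e ∈ (πG a b).edges, e ∈ (G.deleteEdges D).edgeSet := by
        intro e he
        rw [SimpleGraph.edgeSet_deleteEdges]
        exact ⟨SimpleGraph.Walk.edges_subset_edgeSet _ he, hA e he⟩
      have h1 := (hπD a b).2 ((πG a b).transfer _ hsub) ((hπG a b).1.transfer hsub)
      rwa [Stmt2Aux.walkWeight_transfer] at h1
  have hlow : ∀ (r : ℕ) (a b : V), (walkWeight w (πD a b) : WithTop ℝ) ≤ F r a b := by
    intro r
    induction r with
    | zero =>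
      intro a b
      by_cases hc : ∃ e ∈ (πG a b).edges, e ∈ D
      · rw [hF_zero a b hc]; exact le_top
      · push_neg at hc
        rw [hF_intact 0 a b hc]
        exact_mod_cast (hintact a b hc).ge
    | succ r ih =>
      intro a b
      by_cases hc : ∃ e ∈ (πG a b).edges, e ∈ D
      · rw [hF_rec r a b hc]
        refine le_min ?_ ?_
        · exact_mod_cast hL a b
        · refine Finset.le_inf fun x hx => ?_
          have hkey : walkWeight w (πD a b) ≤
              walkWeight w (πD a x) + walkWeight w (πD x b) := by
            have h2 := Stmt2Aux.shortest_le_walk hwD (hπD a b) ((πD a x).append (πD x b))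
            rwa [Stmt2Aux.walkWeight_append] at h2
          calc ((walkWeight w (πD a b) : ℝ) : WithTop ℝ)
              ≤ ((walkWeight w (πD a x) + walkWeight w (πD x b) : ℝ) : WithTop ℝ) := by
                exact_mod_cast hkey
            _ = ((walkWeight w (πD a x) : ℝ) : WithTop ℝ)
                + ((walkWeight w (πD x b) : ℝ) : WithTop ℝ) := by
                rw [← WithTop.coe_add]
            _ ≤ F r a x + F r x b := add_le_add (ih a x) (ih x b)
      · push_neg at hc
        rw [hF_intact _ a b hc]
        exact_mod_cast (hintact a b hc).ge
  intro r
  induction r with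
  | zero =>
    intro u v hrank
    by_cases hc : ∃ e ∈ (πG u v).edges, e ∈ D
    · exfalso
      set p := (πD u v).mapLe (G.deleteEdges_le D) with hp_def
      have hne : {k | Decomposable w G k p}.Nonempty :=
        ⟨p.length, Stmt2Aux.decomposable_length hw0 p⟩
      have hmem : Decomposable w G (pathRank w G p) p := Nat.sInf_mem hne
      have h0 : pathRank w G p = 0 := Nat.le_zero.mp hrank
      rw [h0] at hmem
      have hshort : IsShortestPath w G p := by
        cases hmem with
        | single _ _ hp => exact hp
      have hpeq : p = πG u v := huniqG u v p (πG u v) hshort (hπG u v)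
      obtain ⟨e, he, heD⟩ := hc
      rw [← hpeq] at he
      have hmem2 : e ∈ (πD u v).edges := by
        rw [hp_def, Stmt2Aux.edges_mapLe] at he; exact he
      exact hπD_avoid u v e hmem2 heD
    · push_neg at hc
      rw [hF_intact 0 u v hc, hintact u v hc]
  | succ r ih =>
    intro u v hrank
    by_cases hc : ∃ e ∈ (πG u v).edges, e ∈ D
    · refine le_antisymm ?_ (hlow (r + 1) u v)
      rw [hF_rec r u v hc]
      rcases hH u v with hEq | ⟨x, hxH, hxsupp, hDux, hDxv⟩
      · exact le_trans (min_le_left _ _) (by rw [hEq])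
      · refine le_trans (min_le_right _ _) (le_trans (Finset.inf_le hxH) ?_)
        set p := (πD u v).mapLe (G.deleteEdges_le D) with hp_def
        have hxp : x ∈ p.support := by
          rw [hp_def, Stmt2Aux.support_mapLe]; exact hxsupp
        have hdec : Decomposable w G (r + 1) p := by
          have hne : {k | Decomposable w G k p}.Nonempty :=
            ⟨p.length, Stmt2Aux.decomposable_length hw0 p⟩
          exact Stmt2Aux.Decomposable.mono (Nat.sInf_mem hne) hrank
        obtain ⟨i, j, q1, q2, hij, hpeq, h1, h2⟩ :=
          Stmt2Aux.decomposable_split hw0 hdec x hxp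
        have hpavoid : ∀ e ∈ p.edges, e ∉ D := by
          rw [hp_def, Stmt2Aux.edges_mapLe]; exact hπD_avoid u v
        have h1sub : ∀ e ∈ q1.edges, e ∈ (G.deleteEdges D).edgeSet := by
          intro e he
          rw [SimpleGraph.edgeSet_deleteEdges]
          have hmem : e ∈ p.edges := by
            rw [hpeq, SimpleGraph.Walk.edges_append]; exact List.mem_append_left _ he
          exact ⟨SimpleGraph.Walk.edges_subset_edgeSet _ hmem, hpavoid e hmem⟩
        have h2sub : ∀ e ∈ q2.edges, e ∈ (G.deleteEdges D).edgeSet := by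
          intro e he
          rw [SimpleGraph.edgeSet_deleteEdges]
          have hmem : e ∈ p.edges := by
            rw [hpeq, SimpleGraph.Walk.edges_append]; exact List.mem_append_right _ he
          exact ⟨SimpleGraph.Walk.edges_subset_edgeSet _ hmem, hpavoid e hmem⟩
        set t1 := q1.transfer _ h1sub with ht1_def
        set t2 := q2.transfer _ h2sub with ht2_def
        have hwt : walkWeight w (πD u v) = walkWeight w t1 + walkWeight w t2 := by
          rw [ht1_def, ht2_def, Stmt2Aux.walkWeight_transfer, Stmt2Aux.walkWeight_transfer,
            ← Stmt2Aux.walkWeight_append, ← hpeq, hp_def, Stmt2Aux.walkWeight_mapLe]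
        have hppath : p.IsPath := (hπD u v).1.mapLe _
        have happ : (q1.append q2).IsPath := hpeq ▸ hppath
        have ht1short : IsShortestPath w (G.deleteEdges D) t1 := by
          refine ⟨happ.of_append_left.transfer h1sub, fun s hs => ?_⟩
          have hle := Stmt2Aux.shortest_le_walk hwD (hπD u v) (s.append t2)
          rw [Stmt2Aux.walkWeight_append] at hle
          rw [hwt] at hle
          linarith
        have ht2short : IsShortestPath w (G.deleteEdges D) t2 := by
          refine ⟨happ.of_append_right.transfer h2sub, fun s hs => ?_⟩
          have hle := Stmt2Aux.shortest_le_walk hwD (hπD u v) (t1.append s)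
          rw [Stmt2Aux.walkWeight_append] at hle
          rw [hwt] at hle
          linarith
        have he1 : t1 = πD u x := huniqD u x t1 (πD u x) ht1short (hπD u x)
        have he2 : t2 = πD x v := huniqD x v t2 (πD x v) ht2short (hπD x v)
        have hq1avoid : ∀ e ∈ q1.edges, e ∉ D := by
          intro e he
          have h3 := h1sub e he
          rw [SimpleGraph.edgeSet_deleteEdges] at h3
          exact h3.2
        have hq2avoid : ∀ e ∈ q2.edges, e ∉ D := by
          intro e he
          have h3 := h2sub e he
          rw [SimpleGraph.edgeSet_deleteEdges] at h3
          exact h3.2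
        have hir : i ≤ r := by
          by_contra hgt
          have hj0 : j = 0 := by omega
          rw [hj0] at h2
          have hq2short : IsShortestPath w G q2 := by
            cases h2 with
            | single _ _ hp => exact hp
          have heq2 : q2 = πG x v := huniqG x v q2 (πG x v) hq2short (hπG x v)
          obtain ⟨e, he, heD⟩ := hDxv
          rw [← heq2] at he
          exact hq2avoid e he heD
        have hjr : j ≤ r := by
          by_contra hgt
          have hi0 : i = 0 := by omega
          rw [hi0] at h1
          have hq1short : IsShortestPath w G q1 := by
            cases h1 with
            | single _ _ hp => exact hp
          have heq1 : q1 = πG u x := huniqG u x q1 (πG u x) hq1short (hπG u x)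
          obtain ⟨e, he, heD⟩ := hDux
          rw [← heq1] at he
          exact hq1avoid e he heD
        have hmap1 : t1.mapLe (G.deleteEdges_le D) = q1 :=
          SimpleGraph.Walk.map_toDeleteEdges_eq D hq1avoid
        have hmap2 : t2.mapLe (G.deleteEdges_le D) = q2 :=
          SimpleGraph.Walk.map_toDeleteEdges_eq D hq2avoid
        have hrank1 : pathRank w G ((πD u x).mapLe (G.deleteEdges_le D)) ≤ r := by
          rw [← he1, hmap1]
          exact le_trans (Nat.sInf_le (show i ∈ {k | Decomposable w G k q1} from h1)) hir
        have hrank2 : pathRank w G ((πD x v).mapLe (G.deleteEdges_le D)) ≤ r := by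
          rw [← he2, hmap2]
          exact le_trans (Nat.sInf_le (show j ∈ {k | Decomposable w G k q2} from h2)) hjr
        rw [ih u x hrank1, ih x v hrank2]
        have hsum : walkWeight w (πD u x) + walkWeight w (πD x v) = walkWeight w (πD u v) := by
          rw [← he1, ← he2, hwt]
        exact le_of_eq (by rw [← WithTop.coe_add, hsum])
    · push_neg at hc
      rw [hF_intact (r + 1) u v hc, hintact u v hc]
end

section
/- Fix a vertex pair u,v and an integer d ≥ 1, and assume u and v remain connected in G−D' for every edge set D' with |D'| ≤ d. Let D* be an edge set with |D*| ≤ d maximizing |π_{G−D'}(u,v)| over all edge sets D' with |D'| ≤ d. Then for every edge set D with |D| ≤ d: either |π_{G−D}(u,v)| = |π_{G−D*}(u,v)|, or π_{G−D}(u,v) contains an edge of D*. -/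
open SimpleGraph

variable {V : Type*}

/-- warm-up hitting set, Claim 4.1.  Fix `u, v` and `d ≥ 1`, and assume
`u` and `v` remain connected in `G − D'` for every edge set `D'` with `|D'| ≤ d` (witnessed
by the shortest-path family `π`).  Let `Dstar` with `|Dstar| ≤ d` maximize `|π_{G−D'}(u,v)|`
over all `D'` with `|D'| ≤ d`.  Then for every `D` with `|D| ≤ d`: either
`|π_{G−D}(u,v)| = |π_{G−Dstar}(u,v)|`, or `π_{G−D}(u,v)` contains an edge of `Dstar`. -/
theorem stmt4 [Fintype V] [DecidableEq V] (G : SimpleGraph V) (w : Sym2 V → ℝ)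
    (hw : ∀ e ∈ G.edgeSet, 0 < w e)
    (huniqG : ∀ (a b : V) (p q : G.Walk a b),
      IsShortestPath w G p → IsShortestPath w G q → p = q)
    (u v : V) (d : ℕ) (hd : 1 ≤ d)
    -- shortest paths π_{G−D'}(u,v) for all |D'| ≤ d, assumed unique
    (π : ∀ (D' : Finset (Sym2 V)), D'.card ≤ d → (G.deleteEdges ↑D').Walk u v)
    (hπ : ∀ (D' : Finset (Sym2 V)) (h : D'.card ≤ d),
      IsShortestPath w (G.deleteEdges ↑D') (π D' h))
    (huniq : ∀ (D' : Finset (Sym2 V)) (a b : V) (p q : (G.deleteEdges ↑D').Walk a b),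
      D'.card ≤ d →
      IsShortestPath w (G.deleteEdges ↑D') p → IsShortestPath w (G.deleteEdges ↑D') q → p = q)
    (Dstar : Finset (Sym2 V)) (hDstar : Dstar.card ≤ d)
    -- Dstar maximizes |π_{G−D'}(u,v)| over all D' with |D'| ≤ d
    (hmax : ∀ (D' : Finset (Sym2 V)) (h : D'.card ≤ d),
      walkWeight w (π D' h) ≤ walkWeight w (π Dstar hDstar)) :
    ∀ (D : Finset (Sym2 V)) (hD : D.card ≤ d),
      walkWeight w (π D hD) = walkWeight w (π Dstar hDstar) ∨
      ∃ e ∈ (π D hD).edges, e ∈ Dstar := by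
  intro D hD
  by_cases hhit : ∃ e ∈ (π D hD).edges, e ∈ Dstar
  · exact Or.inr hhit
  push_neg at hhit
  left
  have htrans : ∀ e ∈ (π D hD).edges, e ∈ (G.deleteEdges ↑Dstar).edgeSet := by
    intro e he
    have heG : e ∈ (G.deleteEdges ↑D).edgeSet := (π D hD).edges_subset_edgeSet he
    rw [SimpleGraph.edgeSet_deleteEdges] at heG ⊢
    exact ⟨heG.1, hhit e he⟩
  set q := (π D hD).transfer _ htrans with hq
  have hqpath : q.IsPath := (hπ D hD).1.transfer htrans
  have hwq : walkWeight w q = walkWeight w (π D hD) := by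
    unfold walkWeight
    rw [Walk.edges_transfer]
  have h1 : walkWeight w (π Dstar hDstar) ≤ walkWeight w (π D hD) := by
    rw [← hwq]; exact (hπ Dstar hDstar).2 q hqpath
  exact le_antisymm (hmax D hD) h1
end
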